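/- Takagi factorization: every complex symmetric k×k matrix Ψ (Ψ = Ψᵀ) can be written as Ψ = Uᵀ D U, where U is unitary and D is a diagonal matrix with nonnegative real entries in decreasing order. -/

import Mathlib

/-!
The map `T x = Ψ x̄` is antilinear and satisfies `⟪x, T y⟫ = ⟪y, T x⟫` because `Ψ` is symmetric.
Hence `T ∘ T` is linear, self-adjoint and positive, with `⟪T (T x), x⟫ = ‖T x‖²`. If `μ` is its
largest eigenvalue with eigenvector `w` and `σ = √μ`, then `T w + σ w` (or `i w` when that
vanishes) satisfies `T v = σ v`, and `‖T x‖ ≤ σ ‖x‖` everywhere. `T` preserves the orthogonal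
complement of `v`, so induction on the dimension yields an orthonormal basis of such vectors
with decreasing `σ`'s; its rows form the unitary `U`, and `Ψ Uᴴ = Uᵀ D`.
-/

open scoped InnerProductSpace Matrix

theorem LinearMap.re_inner_apply_self_le_iSup_mul_norm_sq {𝕜 E : Type*} [RCLike 𝕜]
    [NormedAddCommGroup E] [InnerProductSpace 𝕜 E] [FiniteDimensional 𝕜 E]
    (S : E →ₗ[𝕜] E) (x : E) :
    RCLike.re ⟪S x, x⟫_𝕜 ≤
      (⨆ y : { y : E // y ≠ 0 }, RCLike.re ⟪S y, y⟫_𝕜 / ‖(y : E)‖ ^ 2) * ‖x‖ ^ 2 := by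
  rcases eq_or_ne x 0 with rfl | hx
  · simp
  have hbdd : BddAbove (Set.range fun y : { y : E // y ≠ 0 } =>
      RCLike.re ⟪S y, y⟫_𝕜 / ‖(y : E)‖ ^ 2) := by
    refine ⟨‖LinearMap.toContinuousLinearMap S‖, ?_⟩
    rintro _ ⟨y, rfl⟩
    exact (le_abs_self _).trans
      ((LinearMap.toContinuousLinearMap S).rayleighQuotient_le_norm (y : E))
  have h := le_ciSup hbdd ⟨x, hx⟩
  rwa [div_le_iff₀ (by positivity)] at h

theorem Orthonormal.cons {𝕜 E : Type*} [RCLike 𝕜] [NormedAddCommGroup E]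
    [InnerProductSpace 𝕜 E] {n : ℕ} {v : E} {f : Fin n → E} (hf : Orthonormal 𝕜 f)
    (hv : ‖v‖ = 1) (hvf : ∀ i, ⟪v, f i⟫_𝕜 = 0) :
    Orthonormal 𝕜 (Fin.cons v f : Fin (n + 1) → E) := by
  refine ⟨Fin.cases hv hf.1, fun i j hij => ?_⟩
  cases i using Fin.cases <;> cases j using Fin.cases
  · exact absurd rfl hij
  · exact hvf _
  · simpa [inner_eq_zero_symm] using hvf _
  · exact hf.2 fun h => hij (congrArg Fin.succ h)

theorem Fin.antitone_cons {α : Type*} [Preorder α] {n : ℕ} {a : α} {f : Fin n → α}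
    (hf : Antitone f) (ha : ∀ i, f i ≤ a) : Antitone (Fin.cons a f : Fin (n + 1) → α) := by
  intro i j hij
  cases i using Fin.cases <;> cases j using Fin.cases
  · exact le_rfl
  · exact ha _
  · exact absurd hij (by simp)
  · exact hf (Fin.succ_le_succ_iff.mp hij)

namespace LinearMap

variable {E : Type*} [NormedAddCommGroup E] [InnerProductSpace ℂ E]

def IsConSymmetric (T : E →ₗ⋆[ℂ] E) : Prop :=
  ∀ x y, ⟪x, T y⟫_ℂ = ⟪y, T x⟫_ℂ

theorem exists_conEigenvector_of_apply_apply_eq (T : E →ₗ⋆[ℂ] E) {w : E} (hw : w ≠ 0)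
    {σ : ℝ} (hTw : T (T w) = ((σ ^ 2 : ℝ) : ℂ) • w) : ∃ v ≠ 0, T v = (σ : ℂ) • v := by
  by_cases hu : T w + (σ : ℂ) • w = 0
  · -- here `T w = -σ w`, and antilinearity turns the factor `i` into `-i`
    refine ⟨Complex.I • w, smul_ne_zero Complex.I_ne_zero hw, ?_⟩
    rw [map_smulₛₗ, Complex.conj_I, eq_neg_of_add_eq_zero_left hu, smul_comm]
    simp
  · refine ⟨T w + (σ : ℂ) • w, hu, ?_⟩
    rw [map_add, map_smulₛₗ, hTw, Complex.conj_ofReal, smul_add, smul_smul]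
    push_cast
    rw [sq, add_comm]

namespace IsConSymmetric

variable {T : E →ₗ⋆[ℂ] E}

theorem isSymmetric_comp_self (hT : T.IsConSymmetric) : (T.comp T : E →ₗ[ℂ] E).IsSymmetric :=
  fun x y => by rw [comp_apply, comp_apply, ← inner_conj_symm, hT, inner_conj_symm, hT]

theorem inner_apply_apply_self (hT : T.IsConSymmetric) (x : E) :
    ⟪T (T x), x⟫_ℂ = (‖T x‖ ^ 2 : ℝ) := by
  rw [← inner_conj_symm, hT, inner_self_eq_norm_sq_to_K]
  simp

theorem exists_conEigenvector_forall_norm_apply_le (hT : T.IsConSymmetric)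
    [FiniteDimensional ℂ E] [Nontrivial E] :
    ∃ v : E, ∃ σ : ℝ, ‖v‖ = 1 ∧ 0 ≤ σ ∧ T v = (σ : ℂ) • v ∧ ∀ w, ‖T w‖ ≤ σ * ‖w‖ := by
  set S : E →ₗ[ℂ] E := T.comp T
  set μ : ℝ := ⨆ x : { x : E // x ≠ 0 }, RCLike.re ⟪S x, x⟫_ℂ / ‖(x : E)‖ ^ 2
  have hle : ∀ x, ‖T x‖ ^ 2 ≤ μ * ‖x‖ ^ 2 := fun x =>
    calc ‖T x‖ ^ 2 = RCLike.re ⟪S x, x⟫_ℂ := by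
          rw [comp_apply, hT.inner_apply_apply_self, RCLike.re_to_complex, Complex.ofReal_re]
      _ ≤ μ * ‖x‖ ^ 2 := S.re_inner_apply_self_le_iSup_mul_norm_sq x
  have hμ : 0 ≤ μ := by
    obtain ⟨x, hx⟩ := exists_ne (0 : E)
    exact nonneg_of_mul_nonneg_left ((sq_nonneg _).trans (hle x)) (by positivity)
  obtain ⟨w, hw⟩ :=
    hT.isSymmetric_comp_self.hasEigenvalue_iSup_of_finiteDimensional.exists_hasEigenvector
  have hTw : T (T w) = ((√μ ^ 2 : ℝ) : ℂ) • w := by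
    rw [Real.sq_sqrt hμ]
    exact Module.End.mem_eigenspace_iff.mp hw.1
  obtain ⟨v, hv, hTv⟩ := T.exists_conEigenvector_of_apply_apply_eq hw.2 hTw
  refine ⟨(‖v‖⁻¹ : ℂ) • v, √μ, norm_smul_inv_norm hv, Real.sqrt_nonneg μ, ?_, fun x => ?_⟩
  · rw [map_smulₛₗ, hTv, smul_comm, map_inv₀, Complex.conj_ofReal]
  · have h := hle x
    rwa [← Real.sqrt_le_sqrt_iff (by positivity), Real.sqrt_sq (norm_nonneg _),
      Real.sqrt_mul hμ, Real.sqrt_sq (norm_nonneg _)] at h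

theorem mapsTo_orthogonal_span_singleton (hT : T.IsConSymmetric) {v : E} {σ : ℂ}
    (hv : T v = σ • v) : ∀ w ∈ (ℂ ∙ v)ᗮ, T w ∈ (ℂ ∙ v)ᗮ := by
  intro w hw
  rw [Submodule.mem_orthogonal_singleton_iff_inner_left] at hw
  rw [Submodule.mem_orthogonal_singleton_iff_inner_right, hT, hv, inner_smul_right, hw,
    mul_zero]

theorem restrict (hT : T.IsConSymmetric) {p : Submodule ℂ E} (hp : ∀ x ∈ p, T x ∈ p) :
    (T.restrict hp).IsConSymmetric :=
  fun x y => hT x y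

theorem exists_orthonormal_conEigenvectors (hT : T.IsConSymmetric) [FiniteDimensional ℂ E]
    {n : ℕ} (hn : Module.finrank ℂ E = n) :
    ∃ (f : Fin n → E) (σ : Fin n → ℝ), Orthonormal ℂ f ∧ (∀ i, T (f i) = (σ i : ℂ) • f i) ∧
      (∀ i, 0 ≤ σ i) ∧ Antitone σ := by
  induction n generalizing E with
  | zero =>
    exact ⟨Fin.elim0, Fin.elim0, ⟨fun i => i.elim0, fun i => i.elim0⟩, fun i => i.elim0,
      fun i => i.elim0, fun i => i.elim0⟩
  | succ n ih =>
    have := Module.nontrivial_of_finrank_eq_succ hn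
    have : Fact (Module.finrank ℂ E = n + 1) := ⟨hn⟩
    obtain ⟨v, σ₀, hv, hσ₀, hTv, hbound⟩ := hT.exists_conEigenvector_forall_norm_apply_le
    set W := (ℂ ∙ v)ᗮ
    have hW := hT.mapsTo_orthogonal_span_singleton hTv
    obtain ⟨f, σ, hf, hTf, hσ, hσanti⟩ := ih (hT.restrict hW)
      (Submodule.finrank_orthogonal_span_singleton (ne_zero_of_norm_ne_zero (hv ▸ one_ne_zero)))
    have hTf' : ∀ i, T (f i) = (σ i : ℂ) • (f i : E) := fun i => congrArg Subtype.val (hTf i)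
    have hσle : ∀ i, σ i ≤ σ₀ := fun i => by
      simpa [hTf', norm_smul, Submodule.norm_coe, hf.1 i, abs_of_nonneg (hσ i)] using
        hbound (f i)
    refine ⟨Fin.cons v fun i => (f i : E), Fin.cons σ₀ σ, ?_, Fin.cases hTv hTf',
      Fin.cases hσ₀ hσ, Fin.antitone_cons hσanti hσle⟩
    exact (hf.comp_linearIsometry W.subtypeₗᵢ).cons hv
      fun i => Submodule.mem_orthogonal_singleton_iff_inner_right.mp (f i).2

end IsConSymmetric

end LinearMap

namespace Matrix

variable {n : Type*} [Fintype n]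

theorem mem_unitaryGroup_of_orthonormal_rows {𝕜 : Type*} [RCLike 𝕜] [DecidableEq n]
    {U : Matrix n n 𝕜} (hU : Orthonormal 𝕜 fun i => WithLp.toLp 2 (U i)) :
    U ∈ unitaryGroup n 𝕜 := by
  rw [mem_unitaryGroup_iff]
  ext i j
  simpa [eq_comm, mul_apply, one_apply, dotProduct, EuclideanSpace.inner_eq_star_dotProduct]
    using orthonormal_iff_ite.mp hU j i

def conjMulVecₗ (A : Matrix n n ℂ) : EuclideanSpace ℂ n →ₗ⋆[ℂ] EuclideanSpace ℂ n where
  toFun x := WithLp.toLp 2 (A *ᵥ star (WithLp.ofLp x))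
  map_add' x y := by simp [mulVec_add]
  map_smul' c x := by simp [mulVec_smul]

theorem conjMulVecₗ_apply (A : Matrix n n ℂ) (x : EuclideanSpace ℂ n) :
    WithLp.ofLp (A.conjMulVecₗ x) = A *ᵥ star (WithLp.ofLp x) :=
  rfl

theorem isConSymmetric_conjMulVecₗ {A : Matrix n n ℂ} (hA : Aᵀ = A) :
    A.conjMulVecₗ.IsConSymmetric := fun x y => by
  simp only [EuclideanSpace.inner_eq_star_dotProduct, conjMulVecₗ_apply]
  rw [dotProduct_comm, dotProduct_mulVec, ← mulVec_transpose, hA, dotProduct_comm]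

theorem eq_transpose_mul_diagonal_mul {R : Type*} [CommRing R] [StarRing R] [DecidableEq n]
    {A U : Matrix n n R} {d : n → R} (hU : U ∈ unitaryGroup n R)
    (hAU : ∀ i, A *ᵥ star (U i) = d i • U i) : A = Uᵀ * diagonal d * U := by
  have hcol : A * star U = Uᵀ * diagonal d := by
    ext a j
    have := congrFun (hAU j) a
    simp only [mulVec, dotProduct, Pi.star_apply, Pi.smul_apply, smul_eq_mul] at this
    rw [mul_diagonal, transpose_apply, mul_comm, ← this, mul_apply]
    rfl
  rw [← hcol, mul_assoc, mem_unitaryGroup_iff'.mp hU, mul_one]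

end Matrix

theorem stmt_1 (k : ℕ) (Ψ : Matrix (Fin k) (Fin k) ℂ) (hΨ : Ψ = Ψ.transpose) :
    ∃ (U : Matrix (Fin k) (Fin k) ℂ) (d : Fin k → ℝ),
      U ∈ Matrix.unitaryGroup (Fin k) ℂ ∧
      (∀ i, 0 ≤ d i) ∧
      (∀ i j : Fin k, i ≤ j → d j ≤ d i) ∧
      Ψ = U.transpose * Matrix.diagonal (fun i => (d i : ℂ)) * U := by
  obtain ⟨f, σ, hf, hTf, hσ, hσanti⟩ :=
    (Matrix.isConSymmetric_conjMulVecₗ hΨ.symm).exists_orthonormal_conEigenvectors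
      finrank_euclideanSpace_fin
  let U : Matrix (Fin k) (Fin k) ℂ := Matrix.of fun i => WithLp.ofLp (f i)
  have hU : U ∈ Matrix.unitaryGroup (Fin k) ℂ := Matrix.mem_unitaryGroup_of_orthonormal_rows hf
  exact ⟨U, σ, hU, hσ, fun i j hij => hσanti hij,
    Matrix.eq_transpose_mul_diagonal_mul hU fun i => congrArg WithLp.ofLp (hTf i)⟩
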